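/- arXiv:1708.08108 — 2 statements merged into one kernel-verified Lean document; each statement's English description precedes it below -/
import Mathlib

section
/- There exists a constant M > 0 (one may take M = √(2e³)) such that for all integers j, k with 1 ≤ j ≤ k, the ratio R(j,k) = (1/√π) · Γ(k+1)Γ(j+1/2)Γ(k-j+1/2) / (Γ(k+1/2)Γ(j+1)Γ(k-j+1)) satisfies R(j,k) ≤ M. -/
open Real

lemma gammaHalf (n : ℕ) :
    Real.Gamma (n + 1/2) = Real.sqrt π * (2*n).factorial / (4^n * n.factorial) := by
  induction n with
  | zero =>
    rw [show ((0:ℕ):ℝ) + 1/2 = 1/2 by norm_num, Real.Gamma_one_half_eq]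
    norm_num
  | succ n ih =>
    have h : ((n+1 : ℕ) : ℝ) + 1/2 = ((n:ℝ) + 1/2) + 1 := by push_cast; ring
    rw [h, Real.Gamma_add_one (by positivity), ih]
    have h4 : (4:ℝ)^n ≠ 0 := by positivity
    have hf : (n.factorial : ℝ) ≠ 0 := by exact_mod_cast n.factorial_ne_zero
    have e1 : ((2*(n+1)).factorial : ℝ) = (2*n+2)*((2*n+1)*(2*n).factorial) := by
      rw [show 2*(n+1) = (2*n+1)+1 by ring, Nat.factorial_succ, Nat.factorial_succ]
      push_cast; ring
    have e2 : (((n+1)).factorial : ℝ) = (n+1)*n.factorial := by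
      rw [Nat.factorial_succ]; push_cast; ring
    rw [e1, e2]
    rw [pow_succ]
    field_simp
    ring

lemma centralMul (j m : ℕ) :
    (2*j).choose j * (2*m).choose m ≤ (2*(j+m)).choose (j+m) := by
  rw [show 2*(j+m) = 2*j + 2*m by ring, Nat.add_choose_eq]
  exact Finset.single_le_sum (f := fun ij : ℕ × ℕ => (2*j).choose ij.1 * (2*m).choose ij.2) (a := (j, m))
    (fun i _ => Nat.zero_le _)
    (Finset.HasAntidiagonal.mem_antidiagonal.mpr rfl)

theorem stmt1 :
    ∃ M : ℝ, 0 < M ∧ M = Real.sqrt (2 * Real.exp 1 ^ 3) ∧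
      ∀ j k : ℕ, 1 ≤ j → j ≤ k →
        (1 / Real.sqrt π) *
            (Real.Gamma (k + 1) * Real.Gamma (j + 1/2) * Real.Gamma ((k : ℝ) - j + 1/2)) /
            (Real.Gamma (k + 1/2) * Real.Gamma (j + 1) * Real.Gamma ((k : ℝ) - j + 1)) ≤ M := by
  refine ⟨Real.sqrt (2 * Real.exp 1 ^ 3), by positivity, rfl, ?_⟩
  intro j k hj hjk
  have hM : (1:ℝ) ≤ Real.sqrt (2 * Real.exp 1 ^ 3) := by
    have he : (1:ℝ) ≤ Real.exp 1 := Real.one_le_exp zero_le_one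
    have h3 : (1:ℝ) ≤ Real.exp 1 ^ 3 := by nlinarith [he, sq_nonneg (Real.exp 1), mul_le_mul he he (zero_le_one) (by linarith : (0:ℝ) ≤ Real.exp 1)]
    have h1 : (1:ℝ) ≤ 2 * Real.exp 1 ^ 3 := by linarith
    calc (1:ℝ) = Real.sqrt 1 := Real.sqrt_one.symm
      _ ≤ _ := Real.sqrt_le_sqrt h1
  refine le_trans ?_ hM
  obtain ⟨m, rfl⟩ : ∃ m, k = j + m := ⟨k - j, by omega⟩
  have hcast : ((j + m : ℕ):ℝ) - j = m := by push_cast; ring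
  rw [hcast, gammaHalf j, gammaHalf m, gammaHalf (j+m), Real.Gamma_nat_eq_factorial,
    Real.Gamma_nat_eq_factorial, Real.Gamma_nat_eq_factorial]
  have hπ : Real.sqrt π ≠ 0 := ne_of_gt (Real.sqrt_pos.mpr Real.pi_pos)
  have hfj : (j.factorial : ℝ) ≠ 0 := by exact_mod_cast j.factorial_ne_zero
  have hfm : (m.factorial : ℝ) ≠ 0 := by exact_mod_cast m.factorial_ne_zero
  have hfk : ((j+m).factorial : ℝ) ≠ 0 := by exact_mod_cast (j+m).factorial_ne_zero
  have hf2k : ((2*(j+m)).factorial : ℝ) ≠ 0 := by exact_mod_cast (2*(j+m)).factorial_ne_zero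
  have h4j : (4:ℝ)^j ≠ 0 := by positivity
  have h4m : (4:ℝ)^m ≠ 0 := by positivity
  have h4k : (4:ℝ)^(j+m) ≠ 0 := by positivity
  have key : (1 / Real.sqrt π) *
      (((j+m).factorial : ℝ) * (Real.sqrt π * (2*j).factorial / (4^j * j.factorial)) *
        (Real.sqrt π * (2*m).factorial / (4^m * m.factorial))) /
      (Real.sqrt π * (2*(j+m)).factorial / (4^(j+m) * (j+m).factorial) *
        (j.factorial : ℝ) * (m.factorial : ℝ)) =
      (((j+m).factorial : ℝ)^2 * (2*j).factorial * (2*m).factorial) /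
      (((2*(j+m)).factorial : ℝ) * (j.factorial : ℝ)^2 * ((m.factorial : ℝ))^2) := by
    field_simp
    ring
  rw [key]
  rw [div_le_one (by positivity)]
  have cj : (2*j).choose j * j.factorial * j.factorial = (2*j).factorial := by
    have := Nat.choose_mul_factorial_mul_factorial (show j ≤ 2*j by omega)
    rwa [show 2*j - j = j by omega] at this
  have cm : (2*m).choose m * m.factorial * m.factorial = (2*m).factorial := by
    have := Nat.choose_mul_factorial_mul_factorial (show m ≤ 2*m by omega)
    rwa [show 2*m - m = m by omega] at this
  have ck : (2*(j+m)).choose (j+m) * (j+m).factorial * (j+m).factorial = (2*(j+m)).factorial := by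
    have := Nat.choose_mul_factorial_mul_factorial (show j+m ≤ 2*(j+m) by omega)
    rwa [show 2*(j+m) - (j+m) = j+m by omega] at this
  have hnat : (j+m).factorial^2 * (2*j).factorial * (2*m).factorial ≤
      (2*(j+m)).factorial * j.factorial^2 * m.factorial^2 := by
    calc (j+m).factorial^2 * (2*j).factorial * (2*m).factorial
        = ((2*j).choose j * (2*m).choose m) * ((j+m).factorial^2 * j.factorial^2 * m.factorial^2) := by
          rw [← cj, ← cm]; ring
      _ ≤ (2*(j+m)).choose (j+m) * ((j+m).factorial^2 * j.factorial^2 * m.factorial^2) :=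
          Nat.mul_le_mul_right _ (centralMul j m)
      _ = (2*(j+m)).factorial * j.factorial^2 * m.factorial^2 := by rw [← ck]; ring
  exact_mod_cast hnat
end

section
/- Let N_m be the cardinal B-spline of order m ≥ 1. Then N_m satisfies the two-scale relation N_m(x) = 2^{-(m-1)} · ∑_{i=0}^{m} C(m, i) · N_m(2x - i) for all real x. -/
open MeasureTheory

/-- The cardinal B-spline of order `m` (with `N 0 = 0` by convention). -/
noncomputable def cardinalBSpline : ℕ → ℝ → ℝ
  | 0 => fun _ => 0
  | 1 => (Set.Ico (0 : ℝ) 1).indicator 1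
  | (m + 2) => fun x => ∫ y in (0 : ℝ)..1, cardinalBSpline (m + 1) (x - y)

/-!
Induction on `m`. For `m = 1` this is `χ[0,1) = χ[0,1/2) + χ[1/2,1)`. Since
`N_{m+1}(x) = ∫_{x-1}^x N_m`, inserting the relation for `N_m` and substituting `u = 2t - i`
turns each term into `(N_{m+1}(2x - i) + N_{m+1}(2x - i - 1)) / 2`; Pascal's rule
`C(m+1, j) = C(m, j) + C(m, j-1)` then recombines the coefficients.
-/

open Finset intervalIntegral

theorem sum_range_choose_succ_nsmul {M : Type*} [AddCommMonoid M] (n : ℕ) (f : ℕ → M) :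
    ∑ j ∈ range (n + 2), (n + 1).choose j • f j =
      ∑ i ∈ range (n + 1), n.choose i • (f i + f (i + 1)) := by
  have shift : ∑ i ∈ range (n + 1), n.choose (i + 1) • f (i + 1) + f 0 =
      ∑ i ∈ range (n + 1), n.choose i • f i := by
    simpa [sum_range_succ _ (n + 1)] using
      (sum_range_succ' (fun i => n.choose i • f i) (n + 1)).symm
  simp only [sum_range_succ' _ (n + 1), Nat.choose_succ_succ, add_smul, sum_add_distrib, smul_add,
    Nat.choose_zero_right, one_smul, ← shift]
  abel

theorem cardinalBSpline_one_two_scale (x : ℝ) :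
    cardinalBSpline 1 x = cardinalBSpline 1 (2 * x) + cardinalBSpline 1 (2 * x - 1) := by
  simp only [cardinalBSpline, Set.indicator_apply, Set.mem_Ico, Pi.one_apply]
  split_ifs <;> grind

theorem cardinalBSpline_succ_eq_integral (m : ℕ) (hm : 1 ≤ m) (x : ℝ) :
    cardinalBSpline (m + 1) x = ∫ y in (x - 1)..x, cardinalBSpline m y := by
  obtain ⟨k, rfl⟩ := Nat.exists_eq_add_of_le' hm
  simp [cardinalBSpline, integral_comp_sub_left]

theorem continuous_cardinalBSpline_add_two (k : ℕ)
    (h : ∀ a b : ℝ, IntervalIntegrable (cardinalBSpline (k + 1)) volume a b) :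
    Continuous (cardinalBSpline (k + 2)) := by
  have hprim := continuous_primitive h 0
  have hdiff : cardinalBSpline (k + 2) = fun x =>
      (∫ t in (0 : ℝ)..x, cardinalBSpline (k + 1) t) -
        ∫ t in (0 : ℝ)..(x - 1), cardinalBSpline (k + 1) t := by
    funext x
    rw [cardinalBSpline_succ_eq_integral (k + 1) (Nat.le_add_left 1 k),
      integral_interval_sub_left (h 0 x) (h 0 (x - 1))]
  rw [hdiff]
  exact hprim.sub (hprim.comp (continuous_sub_right 1))

theorem intervalIntegrable_cardinalBSpline :
    ∀ (m : ℕ) (a b : ℝ), IntervalIntegrable (cardinalBSpline m) volume a b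
  | 0, _, _ => intervalIntegrable_const
  | 1, _, _ => by
    refine Integrable.intervalIntegrable ?_
    exact (integrable_indicator_iff measurableSet_Ico).2 (integrableOn_const (by simp) (by simp))
  | k + 2, a, b =>
    (continuous_cardinalBSpline_add_two k
      (intervalIntegrable_cardinalBSpline (k + 1))).intervalIntegrable a b

theorem intervalIntegrable_cardinalBSpline_two_mul_sub (m : ℕ) (c a b : ℝ) :
    IntervalIntegrable (fun t => cardinalBSpline m (2 * t - c)) volume a b := by
  simpa using ((intervalIntegrable_cardinalBSpline m (2 * a - c) (2 * b - c)).comp_sub_right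
    c).comp_mul_left (c := 2)

theorem integral_cardinalBSpline_two_mul_sub (m : ℕ) (hm : 1 ≤ m) (x c : ℝ) :
    ∫ t in (x - 1)..x, cardinalBSpline m (2 * t - c) =
      (cardinalBSpline (m + 1) (2 * x - c) + cardinalBSpline (m + 1) (2 * x - c - 1)) / 2 := by
  rw [integral_comp_mul_sub _ two_ne_zero, ← integral_add_adjacent_intervals
    (intervalIntegrable_cardinalBSpline m _ (2 * x - c - 1))
    (intervalIntegrable_cardinalBSpline m _ _),
    cardinalBSpline_succ_eq_integral m hm, cardinalBSpline_succ_eq_integral m hm]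
  ring_nf

theorem cardinalBSpline_two_scale_succ (m : ℕ) (hm : 1 ≤ m)
    (h : ∀ x, cardinalBSpline m x = ((2 : ℝ) ^ (m - 1))⁻¹ *
      ∑ i ∈ range (m + 1), (m.choose i : ℝ) * cardinalBSpline m (2 * x - i)) (x : ℝ) :
    cardinalBSpline (m + 1) x = ((2 : ℝ) ^ m)⁻¹ *
      ∑ i ∈ range (m + 2), ((m + 1).choose i : ℝ) * cardinalBSpline (m + 1) (2 * x - i) := by
  have hint (i : ℕ) : IntervalIntegrable
      (fun t => (m.choose i : ℝ) * cardinalBSpline m (2 * t - i)) volume (x - 1) x :=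
    (intervalIntegrable_cardinalBSpline_two_mul_sub m i _ _).const_mul _
  have hpow : (2 : ℝ) ^ m = 2 * 2 ^ (m - 1) := by
    rw [← pow_succ', Nat.sub_add_cancel hm]
  calc cardinalBSpline (m + 1) x
      = ∫ t in (x - 1)..x, ((2 : ℝ) ^ (m - 1))⁻¹ *
          ∑ i ∈ range (m + 1), (m.choose i : ℝ) * cardinalBSpline m (2 * t - i) := by
        rw [cardinalBSpline_succ_eq_integral m hm]
        exact integral_congr fun t _ => h t
    _ = ((2 : ℝ) ^ (m - 1))⁻¹ * ∑ i ∈ range (m + 1), (m.choose i : ℝ) *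
          ((cardinalBSpline (m + 1) (2 * x - i) +
            cardinalBSpline (m + 1) (2 * x - (i + 1 : ℕ))) / 2) := by
        simp only [intervalIntegral.integral_const_mul,
          intervalIntegral.integral_finsetSum fun i _ => hint i,
          integral_cardinalBSpline_two_mul_sub m hm, Nat.cast_succ, sub_add_eq_sub_sub]
    _ = ((2 : ℝ) ^ m)⁻¹ * ∑ i ∈ range (m + 1), (m.choose i : ℝ) *
          (cardinalBSpline (m + 1) (2 * x - i) +
            cardinalBSpline (m + 1) (2 * x - (i + 1 : ℕ))) := by
        rw [hpow, mul_inv, mul_sum, mul_sum]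
        exact sum_congr rfl fun i _ => by ring
    _ = _ := by
        simp only [← nsmul_eq_mul, sum_range_choose_succ_nsmul]

theorem stmt6 (m : ℕ) (hm : 1 ≤ m) (x : ℝ) :
    cardinalBSpline m x =
      ((2 : ℝ) ^ (m - 1))⁻¹ *
        ∑ i ∈ Finset.range (m + 1), (Nat.choose m i : ℝ) * cardinalBSpline m (2 * x - i) := by
  induction m, hm using Nat.le_induction generalizing x with
  | base => simpa [Finset.sum_range_succ] using cardinalBSpline_one_two_scale x
  | succ m hm ih => simpa using cardinalBSpline_two_scale_succ m hm ih x
end
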